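/- Let ω > 0 satisfy the no-resonance condition Nω ≠ e^{2(log 2 − γ)} for every natural number N. Then for every A₀ > 0 there exists Q > 0 such that for all real α₀ with 0 < |α₀| < A₀ and all p ∈ ℂ with Re(p) < −Q and Im(p) ∈ [0,ω], the operator I − 𝓛(α₀,p) is invertible on ℓ²(ℤ;ℂ) and its inverse equals the Neumann series ∑_{m≥0} 𝓛(α₀,p)^m, convergent in operator norm. -/

import Mathlib

open MeasureTheory

/-- `β₀ := (γ - log 2)/(2π) - i/8`, with `γ` the Euler–Mascheroni constant. -/
noncomputable def beta0 : ℂ :=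
  (((Real.eulerMascheroniConstant - Real.log 2) / (2 * Real.pi) : ℝ) : ℂ) - Complex.I / 8

/-- `h(z) := 2πi / (log z + 4πβ₀)`, with the principal branch of the complex logarithm. -/
noncomputable def hfun (z : ℂ) : ℂ :=
  2 * (Real.pi : ℂ) * Complex.I / (Complex.log z + 4 * (Real.pi : ℂ) * beta0)

/-!
Every point `p + iωn` has modulus at least `-Re p`, so the denominator `log (p + iωn) + 4πβ₀`
of `h` has real part `log ‖p + iωn‖ + 2(γ - log 2)`, which tends to `∞` as `Re p → -∞`,
uniformly in `n`. Hence `sup_n ‖h(p + iωn)‖ → 0`. Since `u ↦ (u_{n+1} - u_{n-1})_n` has norm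
at most `2` on `ℓ²(ℤ)`, the operator `𝓛(α₀,p)` has norm `< 1` for `Re p` negative enough,
uniformly in `|α₀| < A₀`, and the Neumann series converges to the inverse of `1 - 𝓛(α₀,p)`.
-/

open Real Filter Topology

section NeumannSeries

variable {R : Type*} [NormedRing R] [HasSummableGeomSeries R]

theorem exists_inverse_one_sub_tendsto_geom_sum {x : R} (hx : ‖x‖ < 1) :
    ∃ y : R, y * (1 - x) = 1 ∧ (1 - x) * y = 1 ∧
      Tendsto (fun N : ℕ => ∑ m ∈ Finset.range N, x ^ m) atTop (𝓝 y) :=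
  ⟨∑' m : ℕ, x ^ m, geom_series_mul_neg x hx, mul_neg_geom_series x hx,
    (summable_geometric_of_norm_lt_one hx).hasSum.tendsto_sum_nat⟩

end NeumannSeries

namespace lp

section

variable {α : Type*} {E : α → Type*} [∀ i, NormedAddCommGroup (E i)]

theorem summable_norm_sq (u : lp E 2) : Summable fun i => ‖u i‖ ^ 2 := by
  simpa using (lp.memℓp u).summable (by norm_num)

theorem norm_sq_eq_tsum (u : lp E 2) : ‖u‖ ^ 2 = ∑' i, ‖u i‖ ^ 2 := by
  simpa using lp.norm_rpow_eq_tsum (by norm_num) u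

end

section ShiftDifference

variable {E : Type*} [NormedAddCommGroup E]

theorem summable_norm_sq_comp_add (u : lp (fun _ : ℤ => E) 2) (k : ℤ) :
    Summable fun n : ℤ => ‖u (n + k)‖ ^ 2 :=
  (Equiv.addRight k).summable_iff.mpr (summable_norm_sq u)

theorem tsum_norm_sq_comp_add (u : lp (fun _ : ℤ => E) 2) (k : ℤ) :
    ∑' n : ℤ, ‖u (n + k)‖ ^ 2 = ‖u‖ ^ 2 :=
  ((Equiv.addRight k).tsum_eq fun n => ‖u n‖ ^ 2).trans (norm_sq_eq_tsum u).symm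

theorem norm_le_of_norm_apply_le_shift {f u : lp (fun _ : ℤ => E) 2} {c : ℝ} (hc : 0 ≤ c)
    (h : ∀ n, ‖f n‖ ≤ c * (‖u (n + 1)‖ + ‖u (n - 1)‖)) : ‖f‖ ≤ 2 * c * ‖u‖ := by
  simp only [sub_eq_add_neg] at h
  have hpt (n : ℤ) : ‖f n‖ ^ 2 ≤ 2 * c ^ 2 * (‖u (n + 1)‖ ^ 2 + ‖u (n + -1)‖ ^ 2) :=
    calc ‖f n‖ ^ 2 ≤ (c * (‖u (n + 1)‖ + ‖u (n + -1)‖)) ^ 2 := by gcongr; exact h n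
      _ ≤ c ^ 2 * (2 * (‖u (n + 1)‖ ^ 2 + ‖u (n + -1)‖ ^ 2)) := by
        rw [mul_pow]; gcongr; exact add_sq_le
      _ = _ := by ring
  have hs₁ := summable_norm_sq_comp_add u 1
  have hs₂ := summable_norm_sq_comp_add u (-1)
  have hsq : ‖f‖ ^ 2 ≤ (2 * c * ‖u‖) ^ 2 :=
    calc ‖f‖ ^ 2 = ∑' n, ‖f n‖ ^ 2 := norm_sq_eq_tsum f
      _ ≤ ∑' n, 2 * c ^ 2 * (‖u (n + 1)‖ ^ 2 + ‖u (n + -1)‖ ^ 2) :=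
        (summable_norm_sq f).tsum_le_tsum hpt ((hs₁.add hs₂).mul_left _)
      _ = 2 * c ^ 2 * (‖u‖ ^ 2 + ‖u‖ ^ 2) := by
        rw [tsum_mul_left, hs₁.tsum_add hs₂, tsum_norm_sq_comp_add, tsum_norm_sq_comp_add]
      _ = (2 * c * ‖u‖) ^ 2 := by ring
  exact (pow_le_pow_iff_left₀ (norm_nonneg _) (by positivity) two_ne_zero).mp hsq

variable {𝕜 : Type*} [NontriviallyNormedField 𝕜] [NormedSpace 𝕜 E]

theorem opNorm_le_of_apply_eq_smul_sub_shift
    {L : lp (fun _ : ℤ => E) 2 →L[𝕜] lp (fun _ : ℤ => E) 2} {a : ℤ → 𝕜} {c : ℝ} (hc : 0 ≤ c)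
    (ha : ∀ n, ‖a n‖ ≤ c)
    (hL : ∀ u n, L u n = a n • (u (n + 1) - u (n - 1))) : ‖L‖ ≤ 2 * c :=
  L.opNorm_le_bound (by positivity) fun u => norm_le_of_norm_apply_le_shift hc fun n => by
    rw [hL, norm_smul]
    exact mul_le_mul (ha n) (norm_sub_le _ _) (norm_nonneg _) hc

end ShiftDifference

end lp

theorem re_four_pi_mul_beta0 :
    (4 * (π : ℂ) * beta0).re = 2 * (eulerMascheroniConstant - log 2) := by
  simp [beta0, -Complex.ofReal_div, -Complex.ofReal_sub]
  field_simp
  ring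

theorem norm_hfun_le {z : ℂ} {D : ℝ} (hD : 0 < D)
    (hz : exp (2 * (log 2 - eulerMascheroniConstant) + D) ≤ ‖z‖) :
    ‖hfun z‖ ≤ 2 * π / D := by
  have hlog : 2 * (log 2 - eulerMascheroniConstant) + D ≤ log ‖z‖ :=
    (le_log_iff_exp_le ((exp_pos _).trans_le hz)).mpr hz
  have hden : D ≤ ‖Complex.log z + 4 * (π : ℂ) * beta0‖ :=
    calc D ≤ (Complex.log z + 4 * (π : ℂ) * beta0).re := by
          rw [Complex.add_re, Complex.log_re, re_four_pi_mul_beta0]; linarith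
      _ ≤ _ := Complex.re_le_norm _
  have hnum : ‖2 * (π : ℂ) * Complex.I‖ = 2 * π := by simp [abs_of_pos pi_pos]
  rw [hfun, norm_div, hnum]
  gcongr

theorem neumann_series_inverse (ω : ℝ) :
    ∀ A₀ : ℝ, 0 < A₀ → ∃ Q : ℝ, 0 < Q ∧
      ∀ α₀ : ℝ, 0 < |α₀| → |α₀| < A₀ →
        ∀ p : ℂ, p.re < -Q → p.im ∈ Set.Icc 0 ω →
          ∀ L : lp (fun _ : ℤ => ℂ) 2 →L[ℂ] lp (fun _ : ℤ => ℂ) 2,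
            (∀ u : lp (fun _ : ℤ => ℂ) 2, ∀ n : ℤ,
              (L u : ∀ _ : ℤ, ℂ) n =
                -(α₀ : ℂ) * hfun (p + Complex.I * (ω : ℂ) * (n : ℂ)) *
                  ((u : ∀ _ : ℤ, ℂ) (n + 1) - (u : ∀ _ : ℤ, ℂ) (n - 1))) →
            ∃ B : lp (fun _ : ℤ => ℂ) 2 →L[ℂ] lp (fun _ : ℤ => ℂ) 2,
              B * (1 - L) = 1 ∧ (1 - L) * B = 1 ∧
              Filter.Tendsto (fun N : ℕ => ∑ m ∈ Finset.range N, L ^ m)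
                Filter.atTop (nhds B) := by
  intro A₀ hA₀
  have hD : 0 < 4 * π * A₀ := by positivity
  refine ⟨exp (2 * (log 2 - eulerMascheroniConstant) + 4 * π * A₀), exp_pos _,
    fun α₀ _ hα₀ p hp _ L hL => exists_inverse_one_sub_tendsto_geom_sum ?_⟩
  have hh : ∀ n : ℤ, ‖hfun (p + Complex.I * ω * n)‖ ≤ 2 * π / (4 * π * A₀) := fun n =>
    norm_hfun_le hD <| by
      have hre : (p + Complex.I * ω * n).re = p.re := by simp
      linarith [neg_le_abs (p + Complex.I * ω * n).re,
        Complex.abs_re_le_norm (p + Complex.I * ω * n)]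
  calc ‖L‖ ≤ 2 * (|α₀| * (2 * π / (4 * π * A₀))) :=
        lp.opNorm_le_of_apply_eq_smul_sub_shift
          (a := fun n => -(α₀ : ℂ) * hfun (p + Complex.I * ω * n))
          (by positivity)
          (fun n => by rw [norm_mul, norm_neg, Complex.norm_real, norm_eq_abs]; gcongr; exact hh n)
          (fun u n => by rw [hL, smul_eq_mul])
    _ = |α₀| / A₀ := by field_simp; ring
    _ < 1 := (div_lt_one hA₀).mpr hα₀
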